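/- arXiv:0812.2179 — 4 statements merged into one kernel-verified Lean document; each statement's English description precedes it below -/
import Mathlib

section
/- If T is a tree with finitely many leaves and at least one vertex of degree at least 3, then there is no leaf x of T such that T is isomorphic to T - x. -/
/-!
Let `B` be the set of branch vertices (degree `≥ 3`) and let the leaf potential `Φ(T)` be the sum
of `d(ℓ, B)` over the finitely many leaves `ℓ`; both `Φ` and the number of leaves are isomorphism
invariants. Let `x` be a leaf with neighbour `y`. If `deg y ≠ 2`, then `T - x` has fewer leaves
than `T`. If `deg y = 2`, then `y` becomes a leaf of `T - x` in place of `x`. A leaf lies on no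
shortest path between other vertices, so deleting it changes neither distances nor `B`, while
`d(y, B) = d(x, B) - 1`; hence `Φ(T - x) = Φ(T) - 1`.
-/

open SimpleGraph Set

/-- A leaf of a graph: a vertex with exactly one neighbor (degree 1). -/
def IsLeaf {V : Type*} (G : SimpleGraph V) (x : V) : Prop :=
  (G.neighborSet x).encard = 1

/-- `v` is in the core `c(T)`: deleting `v` leaves at least two infinite components. -/
def InCore {V : Type*} (G : SimpleGraph V) (v : V) : Prop :=
  ∃ C D : (G.induce {u | u ≠ v}).ConnectedComponent,
    C ≠ D ∧ C.supp.Infinite ∧ D.supp.Infinite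

namespace SimpleGraph

variable {V W : Type*} {G : SimpleGraph V} {H : SimpleGraph W}

def branchVertices (G : SimpleGraph V) : Set V := {v | 3 ≤ (G.neighborSet v).encard}

/-- Since `sInf ∅ = 0`, this is the distance to the branch vertices only when there is one. -/
noncomputable def branchDist (G : SimpleGraph V) (v : V) : ℕ :=
  sInf (G.dist v '' G.branchVertices)

/-- `∑ᶠ` vanishes on infinite sets: this is meaningful only for finitely many leaves. -/
noncomputable def leafPotential (G : SimpleGraph V) : ℕ :=
  ∑ᶠ ℓ ∈ {v | IsLeaf G v}, G.branchDist ℓ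

lemma Hom.edist_le (f : G →g H) (u v : V) : H.edist (f u) (f v) ≤ G.edist u v := by
  by_cases hr : G.Reachable u v
  · obtain ⟨p, hp⟩ := hr.exists_walk_length_eq_edist
    exact hp ▸ (SimpleGraph.edist_le (p.map f)).trans_eq (by rw [Walk.length_map])
  · exact edist_eq_top_of_not_reachable hr ▸ le_top

namespace Iso

lemma edist_eq (φ : G ≃g H) (u v : V) : H.edist (φ u) (φ v) = G.edist u v :=
  le_antisymm (φ.toHom.edist_le u v) (by simpa using φ.symm.toHom.edist_le (φ u) (φ v))

lemma dist_eq (φ : G ≃g H) (u v : V) : H.dist (φ u) (φ v) = G.dist u v :=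
  congrArg ENat.toNat (φ.edist_eq u v)

lemma encard_neighborSet (φ : G ≃g H) (v : V) :
    (H.neighborSet (φ v)).encard = (G.neighborSet v).encard :=
  (Set.encard_congr (φ.mapNeighborSet v)).symm

lemma setOf_encard_neighborSet (φ : G ≃g H) (P : ℕ∞ → Prop) :
    {w | P (H.neighborSet w).encard} = φ '' {v | P (G.neighborSet v).encard} := by
  ext w
  rw [← φ.apply_symm_apply w, φ.injective.mem_set_image]
  simp only [mem_ofPred_eq, φ.encard_neighborSet]

lemma branchDist_apply (φ : G ≃g H) (v : V) : H.branchDist (φ v) = G.branchDist v := by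
  rw [branchDist, branchVertices, φ.setOf_encard_neighborSet (3 ≤ ·), Set.image_image]
  simp only [φ.dist_eq]
  rfl

lemma setOf_isLeaf (φ : G ≃g H) : {w | IsLeaf H w} = φ '' {v | IsLeaf G v} :=
  φ.setOf_encard_neighborSet (· = 1)

lemma leafPotential_eq (φ : G ≃g H) : H.leafPotential = G.leafPotential := by
  rw [leafPotential, φ.setOf_isLeaf, finsum_mem_image φ.injective.injOn]
  exact finsum_mem_congr rfl fun v _ ↦ φ.branchDist_apply v

lemma encard_setOf_isLeaf (φ : G ≃g H) : {w | IsLeaf H w}.encard = {v | IsLeaf G v}.encard := by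
  rw [φ.setOf_isLeaf, φ.injective.encard_image]

end Iso

lemma encard_neighborSet_induce (s : Set V) (v : s) :
    ((G.induce s).neighborSet v).encard = (G.neighborSet v ∩ s).encard := by
  rw [neighborSet_induce, ← Subtype.val_injective.encard_image, Subtype.image_preimage_coe,
    Set.inter_comm]

lemma edist_induce_of_subsingleton_neighborSet (hG : G.Preconnected) {s : Set V}
    (hs : ∀ v ∉ s, (G.neighborSet v).Subsingleton) (u v : s) :
    (G.induce s).edist u v = G.edist u v := by
  refine le_antisymm ?_ ((Embedding.induce s).toHom.edist_le u v)
  obtain ⟨p, hp, hlen⟩ := (hG u v).exists_path_of_dist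
  have hps : ∀ w ∈ p.support, w ∈ s := fun w hw ↦ by
    by_contra hws
    exact hp.isTrail.not_mem_support_of_subsingleton_neighborSet
      (by rintro rfl; exact hws u.2) (by rintro rfl; exact hws v.2) (hs w hws) hw
  calc (G.induce s).edist u v ≤ (p.induce s hps).length := edist_le _
    _ = G.edist u v := by
      rw [← (hG u v).coe_dist_eq_edist, ← hlen, ← Walk.length_map (Embedding.induce s).toHom,
        Walk.map_induce]
      rfl

section LeafDeletion

variable {x y : V}

lemma adj_of_neighborSet_eq_singleton (hxy : G.neighborSet x = {y}) : G.Adj x y := by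
  rw [← mem_neighborSet, hxy, mem_singleton_iff]

lemma isLeaf_of_neighborSet_eq_singleton (hxy : G.neighborSet x = {y}) : IsLeaf G x := by
  rw [IsLeaf, hxy, encard_singleton]

lemma dist_induce_ne (hG : G.Connected) (hxy : G.neighborSet x = {y}) (u v : {w | w ≠ x}) :
    (G.induce {w | w ≠ x}).dist u v = G.dist u v :=
  congrArg ENat.toNat <| edist_induce_of_subsingleton_neighborSet hG.preconnected
    (fun w hw ↦ by rw [not_not.1 hw, hxy]; exact subsingleton_singleton) u v

lemma dist_eq_dist_add_one (hG : G.Connected) (hxy : G.neighborSet x = {y}) {b : V}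
    (hb : b ≠ x) : G.dist x b = G.dist y b + 1 := by
  obtain ⟨p, -, hp⟩ := hG.exists_path_of_dist x b
  cases p with
  | nil => exact absurd rfl hb
  | @cons _ z _ hadj q =>
    obtain rfl : z = y := hxy.subset hadj
    have hle : G.dist x b ≤ G.dist x z + G.dist z b := hG.dist_triangle
    rw [dist_eq_one_iff_adj.2 hadj] at hle
    have hge : G.dist z b ≤ q.length := dist_le q
    rw [Walk.length_cons] at hp
    omega

lemma branchDist_eq_add_one (hG : G.Connected) (hxy : G.neighborSet x = {y})
    (hB : G.branchVertices.Nonempty) : G.branchDist x = G.branchDist y + 1 := by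
  have hxB : x ∉ G.branchVertices := by simp [branchVertices, hxy]
  have hshift : G.dist x '' G.branchVertices = (· + 1) '' (G.dist y '' G.branchVertices) := by
    rw [image_image]
    exact image_congr fun b hb ↦ dist_eq_dist_add_one hG hxy (ne_of_mem_of_not_mem hb hxB)
  rw [branchDist, branchDist, hshift, ← (add_left_mono (a := 1)).map_csInf (hB.image _)]

lemma encard_neighborSet_induce_ne_of_ne (hxy : G.neighborSet x = {y}) {v : V} (hvx : v ≠ x)
    (hvy : v ≠ y) :
    ((G.induce {w | w ≠ x}).neighborSet ⟨v, hvx⟩).encard = (G.neighborSet v).encard := by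
  rw [encard_neighborSet_induce, inter_eq_left.2]
  rintro _ hv rfl
  exact hvy (hxy.subset hv.symm)

lemma encard_neighborSet_induce_ne_add_one (hxy : G.neighborSet x = {y}) (hyx : y ≠ x) :
    ((G.induce {w | w ≠ x}).neighborSet ⟨y, hyx⟩).encard + 1 = (G.neighborSet y).encard := by
  rw [encard_neighborSet_induce]
  exact encard_sdiff_singleton_add_one (adj_of_neighborSet_eq_singleton hxy).symm

lemma encard_setOf_isLeaf_induce_lt (hfin : {v | IsLeaf G v}.Finite)
    (hxy : G.neighborSet x = {y}) (hy : (G.neighborSet y).encard ≠ 2) :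
    {w | IsLeaf (G.induce {v | v ≠ x}) w}.encard < {v | IsLeaf G v}.encard := by
  have hsub : Subtype.val '' {w | IsLeaf (G.induce {v | v ≠ x}) w} ⊆ {v | IsLeaf G v} \ {x} := by
    rintro _ ⟨⟨v, hvx⟩, hv, rfl⟩
    refine ⟨?_, hvx⟩
    obtain rfl | hvy := eq_or_ne v y
    · have hdeg := encard_neighborSet_induce_ne_add_one hxy hvx
      rw [hv] at hdeg
      exact absurd hdeg.symm hy
    · exact (encard_neighborSet_induce_ne_of_ne hxy hvx hvy).symm.trans hv
  rw [← Subtype.val_injective.encard_image]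
  have hx : x ∈ {v | IsLeaf G v} := isLeaf_of_neighborSet_eq_singleton hxy
  exact (encard_le_encard hsub).trans_lt <|
    hfin.sdiff.encard_lt_encard (sdiff_singleton_ssubset.2 hx)

lemma encard_neighborSet_induce_ne_self_eq_one (hxy : G.neighborSet x = {y})
    (hy : (G.neighborSet y).encard = 2) (hyx : y ≠ x) :
    ((G.induce {w | w ≠ x}).neighborSet ⟨y, hyx⟩).encard = 1 := by
  have hdeg := encard_neighborSet_induce_ne_add_one hxy hyx
  rw [hy, ← one_add_one_eq_two] at hdeg
  exact WithTop.add_right_cancel ENat.one_ne_top hdeg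

lemma image_val_setOf_isLeaf_induce (hxy : G.neighborSet x = {y})
    (hy : (G.neighborSet y).encard = 2) :
    Subtype.val '' {w | IsLeaf (G.induce {v | v ≠ x}) w} = insert y ({v | IsLeaf G v} \ {x}) := by
  ext v
  constructor
  · rintro ⟨⟨v, hvx⟩, hv, rfl⟩
    obtain rfl | hvy := eq_or_ne v y
    · exact mem_insert _ _
    · exact Or.inr ⟨(encard_neighborSet_induce_ne_of_ne hxy hvx hvy).symm.trans hv, hvx⟩
  · rintro (rfl | ⟨hv, hvx⟩)
    · have hyx := (adj_of_neighborSet_eq_singleton hxy).ne'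
      exact ⟨⟨v, hyx⟩, encard_neighborSet_induce_ne_self_eq_one hxy hy hyx, rfl⟩
    · have hvy : v ≠ y := by rintro rfl; norm_num [IsLeaf, hy] at hv
      exact ⟨⟨v, hvx⟩, (encard_neighborSet_induce_ne_of_ne hxy hvx hvy).trans hv, rfl⟩

lemma image_val_branchVertices_induce (hxy : G.neighborSet x = {y})
    (hy : (G.neighborSet y).encard = 2) :
    Subtype.val '' (G.induce {v | v ≠ x}).branchVertices = G.branchVertices := by
  ext v
  constructor
  · rintro ⟨⟨v, hvx⟩, hv, rfl⟩
    have hvy : v ≠ y := by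
      rintro rfl
      have := hv.trans_eq (encard_neighborSet_induce_ne_self_eq_one hxy hy hvx)
      norm_num at this
    exact hv.trans_eq (encard_neighborSet_induce_ne_of_ne hxy hvx hvy)
  · intro hv
    have hvx : v ≠ x := by rintro rfl; norm_num [branchVertices, hxy] at hv
    have hvy : v ≠ y := by rintro rfl; norm_num [branchVertices, hy] at hv
    exact ⟨⟨v, hvx⟩, hv.trans_eq (encard_neighborSet_induce_ne_of_ne hxy hvx hvy).symm, rfl⟩

lemma branchDist_induce (hG : G.Connected) (hxy : G.neighborSet x = {y})
    (hy : (G.neighborSet y).encard = 2) (v : {w | w ≠ x}) :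
    (G.induce {w | w ≠ x}).branchDist v = G.branchDist v := by
  rw [branchDist, branchDist, ← image_val_branchVertices_induce hxy hy, image_image]
  simp only [dist_induce_ne hG hxy]

lemma leafPotential_induce_add_one (hG : G.Connected) (hfin : {v | IsLeaf G v}.Finite)
    (hxy : G.neighborSet x = {y}) (hy : (G.neighborSet y).encard = 2)
    (hB : G.branchVertices.Nonempty) :
    (G.induce {v | v ≠ x}).leafPotential + 1 = G.leafPotential := by
  have hyL : y ∉ {v | IsLeaf G v} \ {x} := fun h ↦ by norm_num [IsLeaf, hy] at h
  calc (G.induce {v | v ≠ x}).leafPotential + 1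
      = ∑ᶠ v ∈ insert y ({v | IsLeaf G v} \ {x}), G.branchDist v + 1 := by
        rw [leafPotential, ← image_val_setOf_isLeaf_induce hxy hy,
          finsum_mem_image Subtype.val_injective.injOn]
        simp only [branchDist_induce hG hxy hy]
    _ = G.branchDist x + ∑ᶠ v ∈ {v | IsLeaf G v} \ {x}, G.branchDist v := by
        rw [finsum_mem_insert _ hyL hfin.sdiff, branchDist_eq_add_one hG hxy hB]
        ring
    _ = G.leafPotential := by
        have hx : x ∈ {v | IsLeaf G v} := isLeaf_of_neighborSet_eq_singleton hxy
        rw [leafPotential, ← finsum_mem_insert _ (notMem_sdiff_of_mem (mem_singleton x))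
          hfin.sdiff, insert_sdiff_singleton, insert_eq_of_mem hx]

end LeafDeletion

end SimpleGraph

/-- a tree with finitely many leaves and a vertex of degree ≥ 3
is not isomorphic to T - x for any leaf x. -/
theorem stmt_0 {V : Type*} (G : SimpleGraph V) (hT : G.IsTree)
    (hfin : {x | IsLeaf G x}.Finite)
    (hdeg : ∃ v, 3 ≤ (G.neighborSet v).encard) :
    ¬ ∃ x, IsLeaf G x ∧ Nonempty (G ≃g G.induce {v | v ≠ x}) := by
  rintro ⟨x, hx, ⟨φ⟩⟩
  obtain ⟨y, hxy⟩ := encard_eq_one.1 hx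
  by_cases hy : (G.neighborSet y).encard = 2
  · have := leafPotential_induce_add_one hT.connected hfin hxy hy hdeg
    rw [φ.leafPotential_eq] at this
    omega
  · exact (encard_setOf_isLeaf_induce_lt hfin hxy hy).ne φ.encard_setOf_isLeaf
end

section
/- If T is a tree that is isomorphic to T - x for some single leaf x, and moreover for every leaf y of T there is an isomorphism from T to T - y, then for every finite set W of leaves of T, T is isomorphic to T - W. -/
/- Delete the leaves of `W` one at a time. In an infinite connected graph no two leaves are
adjacent, so the leaves not yet deleted are still leaves; and `T` is infinite as soon as it has
a leaf `y`, since `T ≅ T - y`. If `ψ : T ≅ T - W` and `a` is a leaf of `T - W`, then `ψ⁻¹ a` is a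
leaf of `T`, so `T ≅ T - ψ⁻¹ a ≅ (T - W) - a = T - (W ∪ {a})`. -/

open SimpleGraph Set

theorem SimpleGraph.Reachable.mem_of_forall_adj_mem {V : Type*} {G : SimpleGraph V} {s : Set V}
    (hs : ∀ u ∈ s, ∀ v, G.Adj u v → v ∈ s) {u v : V} (h : G.Reachable u v) (hu : u ∈ s) :
    v ∈ s := by
  obtain ⟨p⟩ := h
  induction p with
  | nil => exact hu
  | cons hadj _ ih => exact ih (hs _ hu _ hadj)

def SimpleGraph.induceInduceIso {V : Type*} (G : SimpleGraph V) {s : Set V} {t : Set s}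
    {r : Set V} (h : ∀ v, v ∈ r ↔ ∃ hv : v ∈ s, ⟨v, hv⟩ ∈ t) :
    (G.induce s).induce t ≃g G.induce r where
  toEquiv := (Equiv.subtypeSubtypeEquivSubtypeExists s (· ∈ t)).trans
    (Equiv.subtypeEquivRight fun v => (h v).symm)
  map_rel_iff' := Iff.rfl

theorem infinite_of_equiv_of_notMem {V : Type*} {s : Set V} {x : V} (e : V ≃ s) (hx : x ∉ s) :
    Infinite V := by
  by_contra hfin
  rw [not_infinite_iff_finite] at hfin
  obtain ⟨v, hv⟩ := Finite.surjective_of_injective (Subtype.val_injective.comp e.injective) x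
  exact hx (hv ▸ (e v).2)

section IsLeaf

variable {V V' : Type*} {G : SimpleGraph V} {y w : V}

theorem IsLeaf.map {H : SimpleGraph V'} (e : G ≃g H) (hy : IsLeaf G y) : IsLeaf H (e y) := by
  rw [IsLeaf, ← encard_congr (e.mapNeighborSet y)]
  exact hy

theorem IsLeaf.neighborSet_eq (hy : IsLeaf G y) (hyw : G.Adj y w) : G.neighborSet y = {w} := by
  obtain ⟨a, ha⟩ := encard_eq_one.mp hy
  have hw : w ∈ G.neighborSet y := hyw
  rw [ha, mem_singleton_iff] at hw
  rw [ha, hw]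

theorem IsLeaf.not_adj [Infinite V] (hG : G.Connected) (hy : IsLeaf G y) (hw : IsLeaf G w) :
    ¬ G.Adj y w := by
  intro hyw
  have hclosed : ∀ u ∈ ({y, w} : Set V), ∀ v, G.Adj u v → v ∈ ({y, w} : Set V) := by
    rintro u (rfl | rfl) v huv
    · exact .inr ((hy.neighborSet_eq hyw).subset huv)
    · exact .inl ((hw.neighborSet_eq hyw.symm).subset huv)
  have hall : univ ⊆ ({y, w} : Set V) := fun z _ =>
    (hG.preconnected y z).mem_of_forall_adj_mem hclosed (mem_insert y _)
  exact (infinite_univ.mono hall) (toFinite _)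

theorem IsLeaf.induce {s : Set V} (hy : IsLeaf G y) (hys : y ∈ s) (hs : G.neighborSet y ⊆ s) :
    IsLeaf (G.induce s) ⟨y, hys⟩ := by
  rw [IsLeaf, neighborSet_induce,
    encard_preimage_of_injective_subset_range Subtype.val_injective (by simpa using hs)]
  exact hy

end IsLeaf

theorem SimpleGraph.Connected.nonempty_iso_induce_notMem {V : Type*} {G : SimpleGraph V}
    (hG : G.Connected) (h : ∀ y, IsLeaf G y → Nonempty (G ≃g G.induce {v | v ≠ y}))
    {W : Set V} (hW : W.Finite) (hleaf : ∀ w ∈ W, IsLeaf G w) :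
    Nonempty (G ≃g G.induce {v | v ∉ W}) := by
  induction W, hW using Set.Finite.induction_on with
  | empty =>
    rw [show {v : V | v ∉ (∅ : Set V)} = univ by simp]
    exact ⟨G.induceUnivIso.symm⟩
  | @insert a W haW _ ih =>
    obtain ⟨ψ⟩ := ih fun w hw => hleaf w (mem_insert_of_mem a hw)
    have ha : IsLeaf G a := hleaf a (mem_insert a W)
    have : Infinite V := by
      obtain ⟨e⟩ := h a ha
      exact infinite_of_equiv_of_notMem e.toEquiv (x := a) fun h => h rfl
    have ha' : IsLeaf (G.induce {v | v ∉ W}) ⟨a, haW⟩ :=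
      ha.induce haW fun v hav hvW => ha.not_adj hG (hleaf v (mem_insert_of_mem a hvW)) hav
    obtain ⟨φ⟩ := h _ (ha'.map ψ.symm)
    have hψ : BijOn ψ {v | v ≠ ψ.symm ⟨a, haW⟩} {u | u ≠ ⟨a, haW⟩} :=
      ψ.toEquiv.bijOn fun v => not_congr ψ.toEquiv.eq_symm_apply.symm
    refine ⟨φ.trans ((ψ.induce hψ).trans (induceInduceIso G fun v => ?_))⟩
    simp only [mem_ofPred_eq, mem_insert_iff, ne_eq, Subtype.mk.injEq]
    tauto

theorem stmt_3_general {V : Type*} (G : SimpleGraph V) (hT : G.IsTree)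
    (h : ∀ y, IsLeaf G y → Nonempty (G ≃g G.induce {v | v ≠ y})) :
    ∀ W : Set V, W.Finite → (∀ w ∈ W, IsLeaf G w) →
      Nonempty (G ≃g G.induce {v | v ∉ W}) :=
  fun _ hW hleaf => hT.connected.nonempty_iso_induce_notMem h hW hleaf

/-- if T ≅ T - x for some leaf x and T ≅ T - y for every leaf y,
then T ≅ T - W for every finite set W of leaves. -/
theorem stmt_3 {V : Type*} (G : SimpleGraph V) (hT : G.IsTree)
    (h1 : ∃ x, IsLeaf G x ∧ Nonempty (G ≃g G.induce {v | v ≠ x}))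
    (h : ∀ y, IsLeaf G y → Nonempty (G ≃g G.induce {v | v ≠ y})) :
    ∀ W : Set V, W.Finite → (∀ w ∈ W, IsLeaf G w) →
      Nonempty (G ≃g G.induce {v | v ∉ W}) :=
  stmt_3_general G hT h
end

section
/- For any tree T, the core c(T), defined as the subgraph induced by all vertices v such that T - v has at least two infinite components, is connected (hence a subtree of T). -/
open SimpleGraph Set

/-!
If `w` lies on the tree path between two core vertices `u` and `v`, then `u` and `v` fall into
different components of `T - w`, by uniqueness of paths. Each of these components is infinite:
of the (at least two) infinite components of `T - u`, one misses `w`, and every vertex of it is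
joined to `u` by a path avoiding `w`. Hence `w` is in the core, so the core contains the path
between any two of its vertices.
-/

namespace SimpleGraph

variable {V : Type*} {G : SimpleGraph V}

lemma IsAcyclic.not_reachable_induce_ne_of_mem_support (hG : G.IsAcyclic) {u v w : V}
    {P : G.Walk u v} (hP : P.IsPath) (hw : w ∈ P.support) (hwu : w ≠ u) (hwv : w ≠ v) :
    ¬ (G.induce {z | z ≠ w}).Reachable ⟨u, hwu.symm⟩ ⟨v, hwv.symm⟩ := by
  classical
  rintro ⟨q⟩
  have hwq : w ∉ (q.map (Embedding.induce {z | z ≠ w}).toHom).support := by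
    rw [Walk.support_map]
    simp
  have hqP : (q.map (Embedding.induce {z | z ≠ w}).toHom).toPath = (⟨P, hP⟩ : G.Path u v) :=
    (hG.subsingleton_path u v).elim _ _
  exact hwq (Walk.support_toPath_subset_support _ (hqP ▸ hw))

lemma Preconnected.reachable_induce_ne_of_mem_supp (hG : G.Preconnected) {u w : V}
    (hwu : w ≠ u) {E : (G.induce {z | z ≠ u}).ConnectedComponent} (hwE : ⟨w, hwu⟩ ∉ E.supp)
    {x : {z | z ≠ u}} (hx : x ∈ E.supp) :
    ∃ hxw : x.1 ≠ w, (G.induce {z | z ≠ w}).Reachable ⟨u, hwu.symm⟩ ⟨x, hxw⟩ := by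
  classical
  obtain ⟨P, hP⟩ := hG.exists_isPath u x
  obtain ⟨c, hadj, q, rfl⟩ := Walk.exists_eq_cons_of_ne (Ne.symm x.2) P
  have huq : u ∉ q.support := (Walk.cons_isPath_iff hadj q).mp hP |>.2
  let q' := q.induce {z | z ≠ u} fun z hz hzu => huq (hzu ▸ hz)
  -- every vertex of `q` lies in `E`, the component of its endpoint `x`, which misses `w`
  have hqw : ∀ y ∈ q.support, y ≠ w := by
    rintro y hy rfl
    have hy' : (⟨y, hwu⟩ : {z | z ≠ u}) ∈ q'.support := by simpa [q'] using hy
    exact hwE ((ConnectedComponent.sound (q'.dropUntil _ hy').reachable).trans hx)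
  have hPw : ∀ z ∈ (q.cons hadj).support, z ∈ {z | z ≠ w} := by
    simp only [Walk.support_cons, List.mem_cons, forall_eq_or_imp]
    exact ⟨hwu.symm, hqw⟩
  exact ⟨hqw x q.end_mem_support, ((q.cons hadj).induce _ hPw).reachable⟩

end SimpleGraph

lemma InCore.exists_infinite_not_mem_supp {V : Type*} {G : SimpleGraph V} {u : V}
    (hu : InCore G u) (x : {z | z ≠ u}) :
    ∃ E : (G.induce {z | z ≠ u}).ConnectedComponent, E.supp.Infinite ∧ x ∉ E.supp := by
  obtain ⟨C, D, hCD, hC, hD⟩ := hu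
  by_cases hxC : x ∈ C.supp
  · exact ⟨D, hD, fun hxD => hCD (hxC.symm.trans hxD)⟩
  · exact ⟨C, hC, hxC⟩

lemma InCore.infinite_supp_induce_ne {V : Type*} {G : SimpleGraph V} (hG : G.Preconnected)
    {u w : V} (hu : InCore G u) (hwu : w ≠ u) :
    ((G.induce {z | z ≠ w}).connectedComponentMk ⟨u, hwu.symm⟩).supp.Infinite := by
  obtain ⟨E, hE, hwE⟩ := hu.exists_infinite_not_mem_supp ⟨w, hwu⟩
  have := hE.to_subtype
  choose hxw hreach using fun x : E.supp => hG.reachable_induce_ne_of_mem_supp hwu hwE x.2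
  refine Set.infinite_of_injective_forall_mem (f := fun x : E.supp => ⟨x.1.1, hxw x⟩) ?_
    fun x => ConnectedComponent.sound (hreach x).symm
  intro x y hxy
  simpa [Subtype.ext_iff] using hxy

lemma SimpleGraph.IsTree.inCore_of_mem_support {V : Type*} {G : SimpleGraph V} (hT : G.IsTree)
    {u v w : V} (hu : InCore G u) (hv : InCore G v) {P : G.Walk u v} (hP : P.IsPath)
    (hw : w ∈ P.support) : InCore G w := by
  by_cases hwu : w = u
  · exact hwu ▸ hu
  by_cases hwv : w = v
  · exact hwv ▸ hv
  refine ⟨_, _, fun h => ?_, hu.infinite_supp_induce_ne hT.connected.preconnected hwu,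
    hv.infinite_supp_induce_ne hT.connected.preconnected hwv⟩
  exact hT.isAcyclic.not_reachable_induce_ne_of_mem_support hP hw hwu hwv
    (ConnectedComponent.exact h)

theorem stmt_4_general {V : Type*} (G : SimpleGraph V) (hT : G.IsTree) :
    (G.induce {v | InCore G v}).Preconnected := by
  rintro ⟨a, ha⟩ ⟨b, hb⟩
  obtain ⟨P, hP⟩ := hT.connected.preconnected.exists_isPath a b
  exact (P.induce _ fun _ hw => hT.inCore_of_mem_support ha hb hP hw).reachable

/-- the core of an infinite tree is connected. -/
theorem stmt_4 {V : Type*} (G : SimpleGraph V) (hT : G.IsTree)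
    (hinf : Infinite V) :
    (G.induce {v | InCore G v}).Preconnected :=
  stmt_4_general G hT
end

section
/- If x is a leaf of an infinite tree T, then the core of T - x equals the core of T; i.e. for every vertex v ≠ x, T - v has at least two infinite components if and only if (T - x) - v has at least two infinite components. -/
open SimpleGraph Set

/-- If `z` has at most one neighbor, any walk between vertices different from `z`
can be shortened to one avoiding `z`. -/
lemma walk_avoid {W : Type*} {H : SimpleGraph W} {z : W}
    (hz : (H.neighborSet z).Subsingleton) :
    ∀ n {u w : W} (p : H.Walk u w), p.length ≤ n → u ≠ z → w ≠ z →
      ∃ q : H.Walk u w, z ∉ q.support := by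
  intro n
  induction n with
  | zero =>
    intro u w p hlen hu hw
    cases p with
    | nil => exact ⟨.nil, by simp [Ne.symm hu]⟩
    | cons h p' => simp [SimpleGraph.Walk.length_cons] at hlen
  | succ n ih =>
    intro u w p hlen hu hw
    cases p with
    | nil => exact ⟨.nil, by simp [Ne.symm hu]⟩
    | cons h p' =>
      rename_i a
      by_cases ha : a = z
      · subst ha
        cases p' with
        | nil => exact absurd rfl hw
        | cons h2 p'' =>
          rename_i b
          have hb : b = u := hz h2 h.symm
          subst hb
          refine ih p'' ?_ hu hw
          simp only [SimpleGraph.Walk.length_cons] at hlen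
          omega
      · obtain ⟨q', hq'⟩ := ih p' (by simpa [SimpleGraph.Walk.length_cons] using hlen) ha hw
        exact ⟨.cons h q', by
          simp only [SimpleGraph.Walk.support_cons, List.mem_cons]
          rintro (rfl | hmem)
          · exact hu rfl
          · exact hq' hmem⟩

/-- Reachability is unchanged by deleting a vertex with at most one neighbor. -/
lemma reach_induce {W : Type*} {H : SimpleGraph W} {z : W}
    (hz : (H.neighborSet z).Subsingleton) {a b : W} (ha : a ≠ z) (hb : b ≠ z) :
    H.Reachable a b ↔ (H.induce {w | w ≠ z}).Reachable ⟨a, ha⟩ ⟨b, hb⟩ := by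
  constructor
  · rintro ⟨p⟩
    obtain ⟨q, hq⟩ := walk_avoid hz p.length p le_rfl ha hb
    clear p
    induction q with
    | nil => exact Reachable.refl _
    | @cons u c w h q' ih =>
      simp only [SimpleGraph.Walk.support_cons, List.mem_cons] at hq
      push_neg at hq
      have hc : c ≠ z := by
        intro hcz
        exact hq.2 (hcz ▸ q'.start_mem_support)
      have hadj : (H.induce {w | w ≠ z}).Adj ⟨u, Ne.symm hq.1⟩ ⟨c, hc⟩ := by
        simpa [SimpleGraph.induce] using h
      exact hadj.reachable.trans (ih hc hb hq.2)
  · rintro ⟨p⟩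
    have := p.map (SimpleGraph.Hom.comap (Subtype.val) H)
    exact ⟨this⟩

/-- removing a leaf from an infinite tree does not change the core. -/
theorem stmt_6 {V : Type*} (G : SimpleGraph V) (hT : G.IsTree)
    (hinf : Infinite V) (x : V) (hx : IsLeaf G x) :
    ∀ v (hv : v ≠ x),
      (InCore G v ↔ InCore (G.induce {u | u ≠ x}) ⟨v, hv⟩) := by
  intro v hv
  set H := G.induce {u | u ≠ v} with hH
  set K := (G.induce {u | u ≠ x}).induce {u | u ≠ (⟨v, hv⟩ : {u | u ≠ x})} with hK
  have hxv : x ≠ v := Ne.symm hv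
  set z : ↥{u | u ≠ v} := ⟨x, hxv⟩ with hzdef
  -- z has at most one neighbor in H
  have hz : (H.neighborSet z).Subsingleton := by
    obtain ⟨y, hy⟩ := Set.encard_eq_one.mp hx
    intro a ha b hb
    have ha' : (a : V) ∈ G.neighborSet x := by
      simpa [hH, SimpleGraph.induce] using ha
    have hb' : (b : V) ∈ G.neighborSet x := by
      simpa [hH, SimpleGraph.induce] using hb
    rw [hy] at ha' hb'
    exact Subtype.ext (ha'.trans hb'.symm)
  -- the isomorphism between (G - v) - x and (G - x) - v
  let e : (H.induce {a | a ≠ z}) ≃g K :=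
    { toFun := fun a => ⟨⟨a.1.1, fun h => a.2 (Subtype.ext h)⟩,
        fun h => a.1.2 (congrArg Subtype.val h)⟩
      invFun := fun a => ⟨⟨a.1.1, fun h => a.2 (Subtype.ext h)⟩,
        fun h => a.1.2 (congrArg Subtype.val h)⟩
      left_inv := fun a => rfl
      right_inv := fun a => rfl
      map_rel_iff' := Iff.rfl }
  -- the key reachability bridge
  have key : ∀ (u w : V) (hu1 : u ≠ v) (hu2 : u ≠ x) (hw1 : w ≠ v) (hw2 : w ≠ x),
      (H.Reachable ⟨u, hu1⟩ ⟨w, hw1⟩ ↔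
        K.Reachable ⟨⟨u, hu2⟩, fun h => hu1 (congrArg Subtype.val h)⟩
          ⟨⟨w, hw2⟩, fun h => hw1 (congrArg Subtype.val h)⟩) := by
    intro u w hu1 hu2 hw1 hw2
    have huz : (⟨u, hu1⟩ : ↥{u | u ≠ v}) ≠ z := fun h => hu2 (congrArg Subtype.val h)
    have hwz : (⟨w, hw1⟩ : ↥{u | u ≠ v}) ≠ z := fun h => hw2 (congrArg Subtype.val h)
    rw [reach_induce hz huz hwz]
    constructor
    · intro r; exact r.map e.toHom
    · intro r; exact r.map e.symm.toHom
  -- vertex map from K to H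
  let φ : ↥{u | u ≠ (⟨v, hv⟩ : {u | u ≠ x})} → ↥{u | u ≠ v} :=
    fun a => ⟨a.1.1, fun h => a.2 (Subtype.ext h)⟩
  have hφinj : Function.Injective φ := by
    intro a b h
    have h2 : (φ a).1 = (φ b).1 := by rw [h]
    exact Subtype.ext (Subtype.ext h2)
  constructor
  · rintro ⟨C, D, hCD, hCinf, hDinf⟩
    obtain ⟨c, hc, hcz⟩ := (hCinf.diff (Set.finite_singleton z)).nonempty
    obtain ⟨d, hd, hdz⟩ := (hDinf.diff (Set.finite_singleton z)).nonempty
    simp only [Set.mem_singleton_iff] at hcz hdz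
    have hcx : (c : V) ≠ x := fun h => hcz (Subtype.ext h)
    have hdx : (d : V) ≠ x := fun h => hdz (Subtype.ext h)
    refine ⟨K.connectedComponentMk ⟨⟨c.1, hcx⟩, fun h => c.2 (congrArg Subtype.val h)⟩,
      K.connectedComponentMk ⟨⟨d.1, hdx⟩, fun h => d.2 (congrArg Subtype.val h)⟩, ?_, ?_, ?_⟩
    · intro h
      have hr : K.Reachable _ _ := ConnectedComponent.exact h
      have := (key c.1 d.1 c.2 hcx d.2 hdx).mpr hr
      apply hCD
      rw [← (ConnectedComponent.mem_supp_iff C c).mp hc,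
          ← (ConnectedComponent.mem_supp_iff D d).mp hd]
      exact ConnectedComponent.sound this
    · -- infinite supp
      apply Set.Infinite.of_image (f := φ)
      apply Set.Infinite.mono (s := C.supp \ {z}) ?_ (hCinf.diff (Set.finite_singleton z))
      rintro a ⟨haC, haz⟩
      simp only [Set.mem_singleton_iff] at haz
      have hax : (a : V) ≠ x := fun h => haz (Subtype.ext h)
      refine ⟨⟨⟨a.1, hax⟩, fun h => a.2 (congrArg Subtype.val h)⟩, ?_, rfl⟩
      rw [ConnectedComponent.mem_supp_iff]
      apply ConnectedComponent.sound
      refine (key a.1 c.1 a.2 hax c.2 hcx).mp ?_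
      exact ConnectedComponent.exact
        (((ConnectedComponent.mem_supp_iff C a).mp haC).trans
          ((ConnectedComponent.mem_supp_iff C c).mp hc).symm)
    · apply Set.Infinite.of_image (f := φ)
      apply Set.Infinite.mono (s := D.supp \ {z}) ?_ (hDinf.diff (Set.finite_singleton z))
      rintro a ⟨haD, haz⟩
      simp only [Set.mem_singleton_iff] at haz
      have hax : (a : V) ≠ x := fun h => haz (Subtype.ext h)
      refine ⟨⟨⟨a.1, hax⟩, fun h => a.2 (congrArg Subtype.val h)⟩, ?_, rfl⟩
      rw [ConnectedComponent.mem_supp_iff]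
      apply ConnectedComponent.sound
      refine (key a.1 d.1 a.2 hax d.2 hdx).mp ?_
      exact ConnectedComponent.exact
        (((ConnectedComponent.mem_supp_iff D a).mp haD).trans
          ((ConnectedComponent.mem_supp_iff D d).mp hd).symm)
  · rintro ⟨C', D', hCD', hCinf', hDinf'⟩
    obtain ⟨c', hc'⟩ := hCinf'.nonempty
    obtain ⟨d', hd'⟩ := hDinf'.nonempty
    refine ⟨H.connectedComponentMk (φ c'), H.connectedComponentMk (φ d'), ?_, ?_, ?_⟩
    · intro h
      have hr : H.Reachable (φ c') (φ d') := ConnectedComponent.exact h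
      have := (key c'.1.1 d'.1.1 (fun hh => c'.2 (Subtype.ext hh)) c'.1.2
        (fun hh => d'.2 (Subtype.ext hh)) d'.1.2).mp hr
      apply hCD'
      rw [← (ConnectedComponent.mem_supp_iff C' c').mp hc',
          ← (ConnectedComponent.mem_supp_iff D' d').mp hd']
      exact ConnectedComponent.sound this
    · apply Set.Infinite.mono (s := φ '' C'.supp) ?_ (hCinf'.image hφinj.injOn)
      rintro _ ⟨a, haC, rfl⟩
      rw [ConnectedComponent.mem_supp_iff]
      apply ConnectedComponent.sound
      refine (key a.1.1 c'.1.1 (fun hh => a.2 (Subtype.ext hh)) a.1.2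
        (fun hh => c'.2 (Subtype.ext hh)) c'.1.2).mpr ?_
      exact ConnectedComponent.exact
        (((ConnectedComponent.mem_supp_iff C' a).mp haC).trans
          ((ConnectedComponent.mem_supp_iff C' c').mp hc').symm)
    · apply Set.Infinite.mono (s := φ '' D'.supp) ?_ (hDinf'.image hφinj.injOn)
      rintro _ ⟨a, haD, rfl⟩
      rw [ConnectedComponent.mem_supp_iff]
      apply ConnectedComponent.sound
      refine (key a.1.1 d'.1.1 (fun hh => a.2 (Subtype.ext hh)) a.1.2
        (fun hh => d'.2 (Subtype.ext hh)) d'.1.2).mpr ?_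
      exact ConnectedComponent.exact
        (((ConnectedComponent.mem_supp_iff D' a).mp haD).trans
          ((ConnectedComponent.mem_supp_iff D' d').mp hd').symm)
end
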